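/- arXiv:2403.07409 — 4 statements merged into one kernel-verified Lean document; each statement's English description precedes it below -/
import Mathlib

section
/- Generalized Kraft inequality for ε-lossy encoding with side information: Let α, β, q, ℓ be positive integers and let ε ∈ [0,1] be a real. Put X = (Fin α)^ℓ and Y = (Fin β)^ℓ, and let S be a finite set of cardinality q. Let F : S × X × Y → {0,1}* × S be an arbitrary function (encoder output string and final state), and suppose there exists a decoder D : S × S × Y × {0,1}* → X such that for all s ∈ S, x ∈ X, y ∈ Y, writing F(s,x,y) = (u, s'), the output x̂ = D(s, s', y, u) satisfies Σ_{i=1}^{ℓ} 1{x̂_i ≠ x_i} ≤ εℓ. Then for every fixed y ∈ Y: Σ_{x ∈ X} 2^{−min_{s∈S} |π₁(F(s,x,y))|} ≤ q²·B·(1 + log₂(1 + α^ℓ / (q²·B))), where B = Σ_{j=0}^{⌊εℓ⌋} C(ℓ,j)·(α−1)^j. -/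
/-!
Fix `y` and let `L x` be the shortest code length of `x` over the initial states. The map
`x ↦ (s, s', u)` with `|u| = L x` determines, through the decoder, a point within Hamming
distance `⌊εℓ⌋` of `x`, so at most `q²·B·2ⁿ` strings `x` have `L x = n`. Given counts
`c n ≤ K·2ⁿ` summing to `N = α^ℓ`, the sum `∑ c n·2⁻ⁿ` is largest when short lengths are filled
first; comparing every weight `2⁻ⁿ` with `2⁻ᵐ` for `m = ⌊log₂(1 + N/K)⌋` gives
`∑ c n·2⁻ⁿ ≤ K·(m + 1)`.
-/

open Finset

section HammingBall

variable {ι α : Type*} [Fintype ι] [DecidableEq ι] [Fintype α] [DecidableEq α]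

theorem card_filter_filter_ne_eq_le (z : ι → α) (T : Finset ι) :
    #{x : ι → α | ({i | x i ≠ z i} : Finset ι) = T} ≤ (Fintype.card α - 1) ^ #T := by
  calc #{x : ι → α | ({i | x i ≠ z i} : Finset ι) = T}
      ≤ #(Fintype.piFinset fun i => if i ∈ T then univ.erase (z i) else {z i}) := by
        refine card_le_card fun x hx => Fintype.mem_piFinset.2 fun i => ?_
        rw [← (mem_filter.1 hx).2]
        split_ifs with hi <;> simpa using hi
    _ = (Fintype.card α - 1) ^ #T := by
        simp [Fintype.card_piFinset, apply_ite, prod_ite_mem]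

theorem card_hammingDist_eq_le (z : ι → α) (j : ℕ) :
    #{x : ι → α | hammingDist x z = j} ≤ (Fintype.card ι).choose j * (Fintype.card α - 1) ^ j := by
  rw [mul_comm, ← card_univ (α := ι), ← card_powersetCard]
  refine card_le_mul_card_image_of_maps_to (f := fun x : ι → α => ({i | x i ≠ z i} : Finset ι))
    (t := powersetCard j univ)
    (fun x hx => mem_powersetCard.2 ⟨subset_univ _, (mem_filter.1 hx).2⟩) _ fun T hT => ?_
  rw [← (mem_powersetCard.1 hT).2]
  exact (card_le_card fun x hx => by simp_all).trans (card_filter_filter_ne_eq_le z T)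

theorem card_hammingDist_le_le (z : ι → α) (r : ℕ) :
    #{x : ι → α | hammingDist x z ≤ r} ≤
      ∑ j ∈ range (r + 1), (Fintype.card ι).choose j * (Fintype.card α - 1) ^ j := by
  rw [card_eq_sum_card_fiberwise (f := fun x => hammingDist x z) (t := range (r + 1))
    fun x hx => mem_range_succ_iff.2 (mem_filter.1 hx).2]
  refine sum_le_sum fun j _ => (card_le_card fun x hx => ?_).trans (card_hammingDist_eq_le z j)
  simp_all

theorem card_filter_length_eq_le_of_hammingDist_decode_le {T : Type*} [Fintype T]
    [DecidableEq T] (code : (ι → α) → T × List Bool) (dec : T × List Bool → ι → α) {r : ℕ}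
    (hdec : ∀ x, hammingDist (dec (code x)) x ≤ r) (n : ℕ) :
    #{x | (code x).2.length = n} ≤
      (∑ j ∈ range (r + 1), (Fintype.card ι).choose j * (Fintype.card α - 1) ^ j) *
        (Fintype.card T * 2 ^ n) := by
  set s : Finset (ι → α) := {x | (code x).2.length = n}
  have hfiber : ∀ c, #{x ∈ s | code x = c} ≤ #{x : ι → α | hammingDist x (dec c) ≤ r} :=
    fun c => card_le_card fun x hx => by
      rw [mem_filter] at hx ⊢
      exact ⟨mem_univ x, hx.2 ▸ hammingDist_comm (dec (code x)) x ▸ hdec x⟩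
  have himage : s.image code ⊆ univ ×ˢ {u ∈ s.image fun x => (code x).2 | u.length = n} := by
    intro c hc
    obtain ⟨x, hx, rfl⟩ := mem_image.1 hc
    simp only [mem_product, mem_univ, mem_filter, mem_image, true_and]
    exact ⟨⟨x, hx, rfl⟩, (mem_filter.1 hx).2⟩
  calc #s ≤ _ * #(s.image code) :=
        card_le_mul_card_image s _ fun c _ => (hfiber c).trans (card_hammingDist_le_le _ r)
    _ ≤ _ := by
        gcongr
        refine (card_le_card himage).trans ?_
        rw [card_product, card_univ]
        gcongr
        simpa using card_filter_length_eq_le (α := Bool)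

end HammingBall

section Kraft

variable {ι : Type*} [Fintype ι]

theorem sum_inv_two_pow_le_of_card_le {L : ι → ℕ} {K : ℝ}
    (hL : ∀ n, (#{i | L i = n} : ℝ) ≤ K * 2 ^ n) (m : ℕ) :
    ∑ i, ((2 : ℝ) ^ L i)⁻¹ ≤ Fintype.card ι / 2 ^ m + K * (m - 1 + (2 ^ m)⁻¹) := by
  have hpoint : ∀ i, ((2 : ℝ) ^ L i)⁻¹ ≤
      (2 ^ m)⁻¹ + if L i ∈ range m then ((2 : ℝ) ^ L i)⁻¹ - (2 ^ m)⁻¹ else 0 := fun i => by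
    split_ifs with h
    · simp
    · simpa using inv_anti₀ (by positivity)
        (pow_le_pow_right₀ one_le_two (not_lt.1 (mem_range.not.1 h)))
  have hgap : ∀ n ∈ range m, (0 : ℝ) ≤ (2 ^ n)⁻¹ - (2 ^ m)⁻¹ := fun n hn =>
    sub_nonneg.2 (inv_anti₀ (by positivity) (pow_le_pow_right₀ one_le_two (mem_range.1 hn).le))
  calc ∑ i, ((2 : ℝ) ^ L i)⁻¹
      ≤ ∑ i, ((2 ^ m)⁻¹ + if L i ∈ range m then ((2 : ℝ) ^ L i)⁻¹ - (2 ^ m)⁻¹ else 0) :=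
        sum_le_sum fun i _ => hpoint i
    _ = Fintype.card ι / 2 ^ m +
          ∑ n ∈ range m, (#{i | L i = n} : ℝ) * ((2 ^ n)⁻¹ - (2 ^ m)⁻¹) := by
        rw [sum_add_distrib, sum_const, card_univ, nsmul_eq_mul, div_eq_mul_inv, ← sum_filter,
          ← sum_fiberwise_eq_sum_filter univ (range m) L]
        congr 1
        refine sum_congr rfl fun n _ => ?_
        rw [sum_congr rfl fun i hi => by rw [(mem_filter.1 hi).2], sum_const, nsmul_eq_mul]
    _ ≤ Fintype.card ι / 2 ^ m + ∑ n ∈ range m, K * 2 ^ n * ((2 ^ n)⁻¹ - (2 ^ m)⁻¹) := by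
        gcongr with n hn
        · exact hgap n hn
        · exact hL n
    _ = Fintype.card ι / 2 ^ m + K * (m - 1 + (2 ^ m)⁻¹) := by
        have hterm : ∀ n : ℕ,
            K * 2 ^ n * (((2 : ℝ) ^ n)⁻¹ - (2 ^ m)⁻¹) = K - K * 2 ^ n * (2 ^ m)⁻¹ :=
          fun n => by field_simp
        rw [sum_congr rfl fun n _ => hterm n, sum_sub_distrib, sum_const, card_range,
          nsmul_eq_mul, ← sum_mul, ← mul_sum, geom_sum_eq (by norm_num : (2 : ℝ) ≠ 1)]
        field_simp
        ring

theorem sum_inv_two_pow_le_logb {L : ι → ℕ} {K : ℝ} (hK : 0 < K)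
    (hL : ∀ n, (#{i | L i = n} : ℝ) ≤ K * 2 ^ n) :
    ∑ i, ((2 : ℝ) ^ L i)⁻¹ ≤ K * (1 + Real.logb 2 (1 + Fintype.card ι / K)) := by
  set t := Real.logb 2 (1 + Fintype.card ι / K)
  have harg : 1 ≤ 1 + Fintype.card ι / K := le_add_of_nonneg_right (by positivity)
  have ht : 0 ≤ t := Real.logb_nonneg one_lt_two harg
  set m := ⌊t⌋₊
  have hm : (Fintype.card ι + K : ℝ) ≤ 2 * K * 2 ^ m := by
    have hlt : 1 + Fintype.card ι / K < 2 ^ (m + 1) := by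
      rw [← Real.rpow_natCast, ← Real.logb_lt_iff_lt_rpow one_lt_two (by linarith)]
      exact_mod_cast Nat.lt_floor_add_one t
    rw [pow_succ, add_div' _ _ _ hK.ne', div_lt_iff₀ hK] at hlt
    linarith
  calc ∑ i, ((2 : ℝ) ^ L i)⁻¹ ≤ Fintype.card ι / 2 ^ m + K * (m - 1 + (2 ^ m)⁻¹) :=
        sum_inv_two_pow_le_of_card_le hL m
    _ = (Fintype.card ι + K) / 2 ^ m + K * (m - 1) := by ring
    _ ≤ 2 * K + K * (m - 1) := by
        gcongr
        rw [div_le_iff₀ (by positivity)]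
        exact hm
    _ = K * (1 + m) := by ring
    _ ≤ K * (1 + t) := by gcongr; exact Nat.floor_le ht

end Kraft

theorem generalized_kraft_lossy_side_info_general (α q ℓ : ℕ) (β : ℕ)
    (hα : 1 ≤ α) (hq : 1 ≤ q)
    (ε : ℝ)
    (S : Type*) [Fintype S] (hS : Fintype.card S = q)
    (F : S × (Fin ℓ → Fin α) × (Fin ℓ → Fin β) → List Bool × S)
    (D : S × S × (Fin ℓ → Fin β) × List Bool → (Fin ℓ → Fin α))
    (hD : ∀ (s : S) (x : Fin ℓ → Fin α) (y : Fin ℓ → Fin β),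
      ((Finset.univ.filter fun i : Fin ℓ =>
          D (s, (F (s, x, y)).2, y, (F (s, x, y)).1) i ≠ x i).card : ℝ) ≤ ε * ℓ)
    (B : ℝ)
    (hB : B = ∑ j ∈ Finset.range (⌊ε * (ℓ : ℝ)⌋₊ + 1),
      (ℓ.choose j : ℝ) * ((α : ℝ) - 1) ^ j) :
    ∀ y : Fin ℓ → Fin β,
      ∑ x : Fin ℓ → Fin α,
          (2 : ℝ) ^ (-((⨅ s : S, (F (s, x, y)).1.length : ℕ) : ℤ)) ≤
        (q : ℝ) ^ 2 * B *
          (1 + Real.logb 2 (1 + (α : ℝ) ^ ℓ / ((q : ℝ) ^ 2 * B))) := by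
  intro y
  classical
  have : Nonempty S := Fintype.card_pos_iff.1 (hS ▸ hq)
  choose s₀ hs₀ using fun x : Fin ℓ → Fin α =>
    exists_eq_ciInf_of_finite (f := fun s : S => (F (s, x, y)).1.length)
  set Bℕ := ∑ j ∈ range (⌊ε * ℓ⌋₊ + 1), ℓ.choose j * (α - 1) ^ j
  have hBℕ : B = Bℕ := by simp [hB, Bℕ, Nat.cast_sub hα]
  have hBℕ_pos : 1 ≤ Bℕ := by
    simpa using single_le_sum (f := fun j => ℓ.choose j * (α - 1) ^ j) (fun _ _ => Nat.zero_le _)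
      (mem_range.2 (Nat.succ_pos _))
  have hcount : ∀ n, (#{x | ⨅ s : S, (F (s, x, y)).1.length = n} : ℝ) ≤ q ^ 2 * B * 2 ^ n := by
    intro n
    have := card_filter_length_eq_le_of_hammingDist_decode_le (T := S × S)
      (fun x => ((s₀ x, (F (s₀ x, x, y)).2), (F (s₀ x, x, y)).1))
      (fun c => D (c.1.1, c.1.2, y, c.2)) (fun x => Nat.le_floor (hD (s₀ x) x y)) n
    simp only [hs₀, Fintype.card_prod, hS, Fintype.card_fin] at this
    rw [hBℕ]
    exact_mod_cast this.trans_eq (by ring)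
  have hK : (0 : ℝ) < q ^ 2 * B := by
    rw [hBℕ]
    exact_mod_cast Nat.mul_pos (pow_pos hq 2) hBℕ_pos
  simpa using sum_inv_two_pow_le_logb hK hcount

/-- Generalized Kraft inequality for ε-lossy encoding with side information:
if a decoder can recover `x` within Hamming distortion `ε·ℓ` from the side
information `y`, the initial and final states, and the encoder output, then
for every fixed `y` the code lengths (minimized over initial states) satisfy
a Kraft-type inequality with slack `q²·B·(1 + log₂(1 + α^ℓ/(q²·B)))`, where
`B` is the size of the Hamming ball of radius `⌊ε·ℓ⌋`. -/
theorem generalized_kraft_lossy_side_info (α q ℓ : ℕ) (β : ℕ)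
    (hα : 1 ≤ α) (hβ : 1 ≤ β) (hq : 1 ≤ q) (hℓ : 1 ≤ ℓ)
    (ε : ℝ) (hε0 : 0 ≤ ε) (hε1 : ε ≤ 1)
    (S : Type*) [Fintype S] (hS : Fintype.card S = q)
    (F : S × (Fin ℓ → Fin α) × (Fin ℓ → Fin β) → List Bool × S)
    (D : S × S × (Fin ℓ → Fin β) × List Bool → (Fin ℓ → Fin α))
    (hD : ∀ (s : S) (x : Fin ℓ → Fin α) (y : Fin ℓ → Fin β),
      ((Finset.univ.filter fun i : Fin ℓ =>
          D (s, (F (s, x, y)).2, y, (F (s, x, y)).1) i ≠ x i).card : ℝ) ≤ ε * ℓ)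
    (B : ℝ)
    (hB : B = ∑ j ∈ Finset.range (⌊ε * (ℓ : ℝ)⌋₊ + 1),
      (ℓ.choose j : ℝ) * ((α : ℝ) - 1) ^ j) :
    ∀ y : Fin ℓ → Fin β,
      ∑ x : Fin ℓ → Fin α,
          (2 : ℝ) ^ (-((⨅ s : S, (F (s, x, y)).1.length : ℕ) : ℤ)) ≤
        (q : ℝ) ^ 2 * B *
          (1 + Real.logb 2 (1 + (α : ℝ) ^ ℓ / ((q : ℝ) ^ 2 * B))) :=
  generalized_kraft_lossy_side_info_general α q ℓ β hα hq ε S hS F D hD B hB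
end

section
/- Core combinatorial optimization behind the generalized Kraft inequality: Let M > 0 and N > 0 be real numbers, let J be a natural number, and let k_0, k_1, …, k_J be nonnegative reals satisfying k_j ≤ M·2^j for every j and Σ_{j=0}^{J} k_j = N. Then Σ_{j=0}^{J} k_j·2^{−j} ≤ M·(1 + log₂(1 + N/M)). -/
/-!
Fix `m : ℕ`. For `j ≤ m` the excess of `k j / 2 ^ j` over `k j / 2 ^ m` is largest when
`k j = M * 2 ^ j`, where it equals `M * (1 - 2 ^ j / 2 ^ m)`; for `j > m` there is no excess.
Summing the geometric series gives `∑ k j / 2 ^ j ≤ M * (m - 1) + (M + N) / 2 ^ m` for every `m`.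
For `m = ⌊log₂ (1 + N / M)⌋` we have `M + N < 2 * M * 2 ^ m`, so the bound is below
`M * (m + 1) ≤ M * (1 + log₂ (1 + N / M))`.
-/

open Finset Real

lemma div_two_pow_le_of_le_mul_two_pow {x M : ℝ} {j : ℕ} (m : ℕ) (hx0 : 0 ≤ x)
    (hxM : x ≤ M * 2 ^ j) :
    x / 2 ^ j ≤ x / 2 ^ m + if j ≤ m then M * (1 - 2 ^ j / 2 ^ m) else 0 := by
  split_ifs with hjm
  · have hpow : (2 : ℝ) ^ j ≤ 2 ^ m := pow_le_pow_right₀ one_le_two hjm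
    have hexcess : x * (1 / 2 ^ j - 1 / 2 ^ m) ≤ M * 2 ^ j * (1 / 2 ^ j - 1 / 2 ^ m) :=
      mul_le_mul_of_nonneg_right hxM (sub_nonneg.2 (one_div_le_one_div_of_le (by positivity) hpow))
    have hj : (2 : ℝ) ^ j ≠ 0 := by positivity
    have hm : (2 : ℝ) ^ m ≠ 0 := by positivity
    field_simp at hexcess ⊢
    linarith
  · rw [add_zero]
    exact div_le_div_of_nonneg_left hx0 (by positivity)
      (pow_le_pow_right₀ one_le_two (not_le.1 hjm).le)

lemma sum_range_succ_one_sub_two_pow_div (m : ℕ) :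
    ∑ j ∈ range (m + 1), (1 - (2 : ℝ) ^ j / 2 ^ m) = m - 1 + 1 / 2 ^ m := by
  rw [sum_sub_distrib, ← sum_div, geom_sum_eq (by norm_num)]
  simp only [sum_const, card_range, nsmul_eq_mul, mul_one, Nat.cast_add, Nat.cast_one]
  field_simp
  ring

theorem sum_div_two_pow_le {M : ℝ} (hM : 0 ≤ M) {s : Finset ℕ} {k : ℕ → ℝ}
    (hk0 : ∀ j ∈ s, 0 ≤ k j) (hkM : ∀ j ∈ s, k j ≤ M * 2 ^ j) (m : ℕ) :
    ∑ j ∈ s, k j / 2 ^ j ≤ M * (m - 1) + (M + ∑ j ∈ s, k j) / 2 ^ m := by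
  have hslack : ∑ j ∈ s, (if j ≤ m then M * (1 - 2 ^ j / 2 ^ m) else 0) ≤
      ∑ j ∈ range (m + 1), M * (1 - (2 : ℝ) ^ j / 2 ^ m) := by
    rw [← sum_filter]
    refine sum_le_sum_of_subset_of_nonneg (fun j hj => ?_) fun j hj _ => ?_
    · exact mem_range_succ_iff.2 (mem_filter.1 hj).2
    · have hpow : (2 : ℝ) ^ j ≤ 2 ^ m := pow_le_pow_right₀ one_le_two (mem_range_succ_iff.1 hj)
      exact mul_nonneg hM (sub_nonneg.2 ((div_le_one (by positivity)).2 hpow))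
  calc ∑ j ∈ s, k j / 2 ^ j
      ≤ ∑ j ∈ s, (k j / 2 ^ m + if j ≤ m then M * (1 - 2 ^ j / 2 ^ m) else 0) :=
        sum_le_sum fun j hj => div_two_pow_le_of_le_mul_two_pow m (hk0 j hj) (hkM j hj)
    _ ≤ (∑ j ∈ s, k j) / 2 ^ m + ∑ j ∈ range (m + 1), M * (1 - (2 : ℝ) ^ j / 2 ^ m) := by
        rw [sum_add_distrib, ← sum_div]
        exact add_le_add_right hslack _
    _ = M * (m - 1) + (M + ∑ j ∈ s, k j) / 2 ^ m := by
        rw [← mul_sum, sum_range_succ_one_sub_two_pow_div]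
        ring

lemma lt_two_pow_natFloor_logb_add_one {y : ℝ} (hy : 0 < y) :
    y < 2 ^ (⌊logb 2 y⌋₊ + 1) := by
  have h := (logb_lt_iff_lt_rpow one_lt_two hy).1 (Nat.lt_floor_add_one (logb 2 y))
  rwa [← Nat.cast_succ, rpow_natCast] at h

theorem kraft_core_optimization_general (M N : ℝ) (hM : 0 < M) (J : ℕ)
    (k : ℕ → ℝ) (hk0 : ∀ j ≤ J, 0 ≤ k j) (hkM : ∀ j ≤ J, k j ≤ M * 2 ^ j)
    (hsum : ∑ j ∈ Finset.range (J + 1), k j = N) :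
    ∑ j ∈ Finset.range (J + 1), k j * (2 : ℝ) ^ (-(j : ℤ)) ≤
      M * (1 + Real.logb 2 (1 + N / M)) := by
  replace hk0 : ∀ j ∈ range (J + 1), 0 ≤ k j := fun j hj => hk0 j (mem_range_succ_iff.1 hj)
  replace hkM : ∀ j ∈ range (J + 1), k j ≤ M * 2 ^ j := fun j hj => hkM j (mem_range_succ_iff.1 hj)
  have hN : 0 ≤ N := hsum ▸ sum_nonneg hk0
  set y := 1 + N / M
  have hy : 1 ≤ y := le_add_of_nonneg_right (div_nonneg hN hM.le)
  set m := ⌊logb 2 y⌋₊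
  have hm : (m : ℝ) ≤ logb 2 y := Nat.floor_le (logb_nonneg one_lt_two hy)
  have hMN : (M + N) / 2 ^ m < 2 * M := by
    have hMy : M + N = M * y := by rw [mul_add, mul_one, mul_div_cancel₀ _ hM.ne']
    have hy2 : y < 2 ^ m * 2 :=
      pow_succ (2 : ℝ) m ▸ lt_two_pow_natFloor_logb_add_one (zero_lt_one.trans_le hy)
    rw [div_lt_iff₀ (by positivity), hMy]
    nlinarith
  calc ∑ j ∈ range (J + 1), k j * (2 : ℝ) ^ (-(j : ℤ))
      = ∑ j ∈ range (J + 1), k j / 2 ^ j := by simp [zpow_neg, div_eq_mul_inv]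
    _ ≤ M * (m - 1) + (M + N) / 2 ^ m := hsum ▸ sum_div_two_pow_le hM.le hk0 hkM m
    _ ≤ M * (1 + logb 2 y) := by linarith [mul_le_mul_of_nonneg_left hm hM.le]

/-- Core combinatorial optimization behind the generalized Kraft inequality. -/
theorem kraft_core_optimization (M N : ℝ) (hM : 0 < M) (hN : 0 < N) (J : ℕ)
    (k : ℕ → ℝ) (hk0 : ∀ j ≤ J, 0 ≤ k j) (hkM : ∀ j ≤ J, k j ≤ M * 2 ^ j)
    (hsum : ∑ j ∈ Finset.range (J + 1), k j = N) :
    ∑ j ∈ Finset.range (J + 1), k j * (2 : ℝ) ^ (-(j : ℤ)) ≤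
      M * (1 + Real.logb 2 (1 + N / M)) :=
  kraft_core_optimization_general M N hM J k hk0 hkM hsum
end

section
/- Random-binning error bound with side information (single-source case): Let A be a finite set, x₀ ∈ A, let L : A → ℕ be a lossless length function (|{a ∈ A : L(a) = l}| ≤ 2^l for every natural number l), let M ≥ 1 be an integer, and let T ≥ 0 be a real number. Let φ : A → Fin M be a uniformly random function (i.e., uniformly distributed over all functions from A to {0,…,M−1}). Then the probability that there exists a ∈ A with a ≠ x₀, L(a) ≤ T, and φ(a) = φ(x₀) is at most 2·2^T / M. -/
/-!
Two points `a ≠ x₀` collide under a uniformly random binning with probability exactly `1/M`,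
so by the union bound the error probability is at most `1/M` times the number of candidates
`a` with `L a ≤ T`. Losslessness bounds that number by `∑_{l ≤ ⌊T⌋} 2^l < 2^(⌊T⌋ + 1) ≤ 2 · 2^T`.
-/

open Finset

section Collision

variable {α β : Type*} [Fintype α] [DecidableEq α] [Fintype β] [DecidableEq β]

def collisionProdEquiv {a b : α} (hab : a ≠ b) :
    {φ : α → β // φ a = φ b} × β ≃ (α → β) where
  toFun p := Function.update p.1.1 a p.2
  invFun φ := (⟨Function.update φ a (φ b), by simp [Function.update_of_ne hab.symm]⟩, φ a)
  left_inv := by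
    rintro ⟨⟨ψ, hψ⟩, c⟩
    refine Prod.ext (Subtype.ext ?_) (Function.update_self a c ψ)
    simp only [Function.update_of_ne hab.symm, Function.update_idem, ← hψ,
      Function.update_eq_self]
  right_inv φ := by
    simp only [Function.update_idem, Function.update_eq_self]

theorem card_filter_apply_eq_apply_mul_card {a b : α} (hab : a ≠ b) :
    #{φ : α → β | φ a = φ b} * Fintype.card β = Fintype.card (α → β) := by
  simpa [Fintype.card_subtype] using Fintype.card_congr (collisionProdEquiv (β := β) hab)

theorem card_filter_apply_eq_apply_div_card_le {a b : α} (hab : a ≠ b) :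
    (#{φ : α → β | φ a = φ b} : ℝ) / Fintype.card (α → β) ≤ (Fintype.card β : ℝ)⁻¹ := by
  rw [← card_filter_apply_eq_apply_mul_card hab, Nat.cast_mul]
  rcases eq_or_ne (#{φ : α → β | φ a = φ b} : ℝ) 0 with h | h
  · rw [h, zero_div]
    positivity
  · rw [div_mul_cancel_left₀ h]

theorem card_filter_exists_apply_eq_div_card_le {S : Finset α} {b : α} (hb : b ∉ S) :
    (#{φ : α → β | ∃ a ∈ S, φ a = φ b} : ℝ) / Fintype.card (α → β) ≤
      #S / Fintype.card β := by
  have hunion : ({φ : α → β | ∃ a ∈ S, φ a = φ b} : Finset (α → β)) =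
      S.biUnion fun a => {φ : α → β | φ a = φ b} := by
    ext φ
    simp
  calc (#{φ : α → β | ∃ a ∈ S, φ a = φ b} : ℝ) / Fintype.card (α → β)
      ≤ (∑ a ∈ S, #{φ : α → β | φ a = φ b} : ℕ) / Fintype.card (α → β) := by
        rw [hunion]
        gcongr
        exact card_biUnion_le
    _ = ∑ a ∈ S, (#{φ : α → β | φ a = φ b} : ℝ) / Fintype.card (α → β) := by
        rw [Nat.cast_sum, sum_div]
    _ ≤ ∑ _a ∈ S, (Fintype.card β : ℝ)⁻¹ :=
        sum_le_sum fun a ha => card_filter_apply_eq_apply_div_card_le (ne_of_mem_of_not_mem ha hb)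
    _ = #S / Fintype.card β := by
        rw [sum_const, nsmul_eq_mul, div_eq_mul_inv]

end Collision

section LosslessLength

variable {α : Type*} [Fintype α] (L : α → ℕ)

theorem card_filter_le_lt_two_pow (hL : ∀ l : ℕ, #{a | L a = l} ≤ 2 ^ l) (n : ℕ) :
    #{a | L a ≤ n} < 2 ^ (n + 1) :=
  calc #{a | L a ≤ n} = ∑ l ∈ range (n + 1), #{a ∈ {a | L a ≤ n} | L a = l} :=
        card_eq_sum_card_fiberwise fun a ha => by simpa [Nat.lt_succ_iff] using ha
    _ ≤ ∑ l ∈ range (n + 1), 2 ^ l := by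
        refine sum_le_sum fun l hl => le_trans (card_le_card fun a => ?_) (hL l)
        simp +contextual
    _ < 2 ^ (n + 1) := Nat.geomSum_lt le_rfl fun l hl => mem_range.1 hl

theorem card_filter_cast_le_le_two_mul_rpow (hL : ∀ l : ℕ, #{a | L a = l} ≤ 2 ^ l) (T : ℝ) :
    (#{a | (L a : ℝ) ≤ T} : ℝ) ≤ 2 * (2 : ℝ) ^ T := by
  rcases lt_or_ge T 0 with hT | hT
  · have hempty : ({a | (L a : ℝ) ≤ T} : Finset α) = ∅ :=
      filter_false_of_mem fun a _ => not_le.2 (hT.trans_le (Nat.cast_nonneg _))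
    rw [hempty, card_empty, Nat.cast_zero]
    positivity
  have hsub : ({a | (L a : ℝ) ≤ T} : Finset α) ⊆ ({a | L a ≤ ⌊T⌋₊} : Finset α) :=
    monotone_filter_right _ fun _ _ => Nat.le_floor
  calc (#{a | (L a : ℝ) ≤ T} : ℝ) ≤ (2 ^ (⌊T⌋₊ + 1) : ℕ) := by
        exact_mod_cast (card_le_card hsub).trans (card_filter_le_lt_two_pow L hL _).le
    _ = 2 * (2 : ℝ) ^ (⌊T⌋₊ : ℝ) := by
        rw [Real.rpow_natCast]
        push_cast
        ring
    _ ≤ 2 * (2 : ℝ) ^ T := by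
        gcongr
        · norm_num
        · exact Nat.floor_le hT

end LosslessLength

open scoped Classical in
theorem random_binning_error_single_general (A : Type*) [Fintype A] (x₀ : A) (L : A → ℕ)
    (hL : ∀ l : ℕ, (Finset.univ.filter fun a => L a = l).card ≤ 2 ^ l)
    (M : ℕ) (T : ℝ) :
    ((Finset.univ.filter fun φ : A → Fin M =>
        ∃ a : A, a ≠ x₀ ∧ (L a : ℝ) ≤ T ∧ φ a = φ x₀).card : ℝ) /
      (Fintype.card (A → Fin M)) ≤ 2 * (2 : ℝ) ^ T / M := by
  set S : Finset A := {a | a ≠ x₀ ∧ (L a : ℝ) ≤ T}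
  have hevent : ({φ : A → Fin M | ∃ a : A, a ≠ x₀ ∧ (L a : ℝ) ≤ T ∧ φ a = φ x₀} :
      Finset (A → Fin M)) = ({φ : A → Fin M | ∃ a ∈ S, φ a = φ x₀} : Finset (A → Fin M)) := by
    ext φ
    simp [S, and_assoc]
  have hS : (#S : ℝ) ≤ 2 * (2 : ℝ) ^ T :=
    le_trans (by exact_mod_cast card_le_card (monotone_filter_right _ fun _ _ => And.right))
      (card_filter_cast_le_le_two_mul_rpow L hL T)
  calc _ ≤ (#S : ℝ) / Fintype.card (Fin M) := by
        rw [hevent]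
        exact card_filter_exists_apply_eq_div_card_le (by simp [S])
    _ ≤ 2 * (2 : ℝ) ^ T / M := by
        rw [Fintype.card_fin]
        gcongr

open scoped Classical in
/-- Random-binning error bound with side information (single-source case):
the probability, under a uniformly random binning `φ : A → Fin M`, that some
`a ≠ x₀` with `L a ≤ T` falls in the bin of `x₀`, is at most `2 · 2^T / M`. -/
theorem random_binning_error_single (A : Type*) [Fintype A] (x₀ : A) (L : A → ℕ)
    (hL : ∀ l : ℕ, (Finset.univ.filter fun a => L a = l).card ≤ 2 ^ l)
    (M : ℕ) (hM : 1 ≤ M) (T : ℝ) (hT : 0 ≤ T) :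
    ((Finset.univ.filter fun φ : A → Fin M =>
        ∃ a : A, a ≠ x₀ ∧ (L a : ℝ) ≤ T ∧ φ a = φ x₀).card : ℝ) /
      (Fintype.card (A → Fin M)) ≤ 2 * (2 : ℝ) ^ T / M :=
  random_binning_error_single_general A x₀ L hL M T
end

section
/- Random-binning error bound (joint case): Let X and Y be finite sets, (x₀,y₀) ∈ X × Y, and let L : X × Y → ℕ be a lossless length function (|{(x,y) : L(x,y) = l}| ≤ 2^l for every natural number l). Let M_x, M_y ≥ 1 be integers and T ≥ 0 a real. Let φ_x : X → Fin M_x and φ_y : Y → Fin M_y be independent uniformly random functions. Then the probability that there exists a pair (x̃,ỹ) with x̃ ≠ x₀, ỹ ≠ y₀, L(x̃,ỹ) ≤ T, φ_x(x̃) = φ_x(x₀), and φ_y(ỹ) = φ_y(y₀) is at most 2·2^T / (M_x·M_y). -/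
/-!
A union bound over the admissible pairs `(x̃, ỹ)`: for `x̃ ≠ x₀` the event
`φ_x x̃ = φ_x x₀` has probability exactly `1 / M_x`, independently of the `y`-side event of
probability `1 / M_y`, and by losslessness at most `∑_{l ≤ ⌊T⌋} 2^l < 2 · 2^T` pairs have
length at most `T`.
-/

open Finset

def IsLosslessLength {ι : Type*} [Fintype ι] (L : ι → ℕ) : Prop :=
  ∀ l : ℕ, #{i | L i = l} ≤ 2 ^ l

namespace IsLosslessLength

variable {ι : Type*} [Fintype ι] {L : ι → ℕ}

theorem card_filter_le_lt (hL : IsLosslessLength L) (n : ℕ) :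
    #{i | L i ≤ n} < 2 ^ (n + 1) :=
  calc #{i | L i ≤ n}
      = ∑ l ∈ range (n + 1), #{i ∈ {i | L i ≤ n} | L i = l} :=
        card_eq_sum_card_fiberwise fun i hi => by simpa [Nat.lt_succ_iff] using hi
    _ ≤ ∑ l ∈ range (n + 1), 2 ^ l :=
        sum_le_sum fun l _ => (card_le_card fun i => by simp).trans (hL l)
    _ < 2 ^ (n + 1) := Nat.geomSum_lt le_rfl fun l hl => mem_range.1 hl

theorem card_filter_le_real (hL : IsLosslessLength L) {T : ℝ} (hT : 0 ≤ T) :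
    (#{i | (L i : ℝ) ≤ T} : ℝ) ≤ 2 * 2 ^ T := by
  have hfloor : #{i | (L i : ℝ) ≤ T} = #{i | L i ≤ ⌊T⌋₊} := by
    simp only [Nat.le_floor_iff hT]
  calc (#{i | (L i : ℝ) ≤ T} : ℝ) ≤ 2 ^ (⌊T⌋₊ + 1) := by
        rw [hfloor]; exact_mod_cast (hL.card_filter_le_lt _).le
    _ = 2 * (2 : ℝ) ^ (⌊T⌋₊ : ℝ) := by rw [Real.rpow_natCast, pow_succ']
    _ ≤ 2 * 2 ^ T := by gcongr; exacts [one_le_two, Nat.floor_le hT]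

end IsLosslessLength

section Binning

variable {α β : Type*} [Fintype α] [DecidableEq α] [Fintype β] [DecidableEq β] {M N : ℕ}

/-- `(f, c) ↦ update f x₀ c` is a bijection from the collision set times `Fin M` onto all
binnings. -/
theorem card_filter_apply_eq_apply_mul {x x₀ : α} (hx : x ≠ x₀) :
    #{f : α → Fin M | f x = f x₀} * M = M ^ Fintype.card α :=
  calc #{f : α → Fin M | f x = f x₀} * M
      = #(({f | f x = f x₀} : Finset (α → Fin M)) ×ˢ (univ : Finset (Fin M))) := by
        rw [card_product, card_univ, Fintype.card_fin]
    _ = #(univ : Finset (α → Fin M)) :=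
        card_nbij' (fun p => Function.update p.1 x₀ p.2)
          (fun g => (Function.update g x₀ (g x), g x₀))
          (fun _ _ => mem_coe.2 (mem_univ _)) (fun g _ => by simp [Function.update_of_ne hx])
          (fun p hp => by
            obtain ⟨f, c⟩ := p
            have hf : f x = f x₀ := by simpa using hp
            simp [Function.update_of_ne hx, hf])
          (fun g _ => by simp)
    _ = M ^ Fintype.card α := by simp

def binCollision (M N : ℕ) (x₀ : α) (y₀ : β) (p : α × β) :
    Finset ((α → Fin M) × (β → Fin N)) :=
  {φ | φ.1 p.1 = φ.1 x₀ ∧ φ.2 p.2 = φ.2 y₀}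

theorem card_binCollision_mul {x₀ : α} {y₀ : β} {p : α × β} (hx : p.1 ≠ x₀)
    (hy : p.2 ≠ y₀) :
    #(binCollision M N x₀ y₀ p) * (M * N) =
      Fintype.card ((α → Fin M) × (β → Fin N)) := by
  have hprod : binCollision M N x₀ y₀ p =
      ({f | f p.1 = f x₀} : Finset (α → Fin M)) ×ˢ
        ({g | g p.2 = g y₀} : Finset (β → Fin N)) := by
    ext; simp [binCollision]
  rw [hprod, card_product, Fintype.card_prod, Fintype.card_fun, Fintype.card_fun,
    Fintype.card_fin, Fintype.card_fin, ← card_filter_apply_eq_apply_mul hx,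
    ← card_filter_apply_eq_apply_mul hy]
  ring

theorem card_biUnion_binCollision_mul_le {x₀ : α} {y₀ : β} (P : Finset (α × β))
    (hP : ∀ p ∈ P, p.1 ≠ x₀ ∧ p.2 ≠ y₀) :
    #(P.biUnion (binCollision M N x₀ y₀)) * (M * N) ≤
      #P * Fintype.card ((α → Fin M) × (β → Fin N)) :=
  calc #(P.biUnion (binCollision M N x₀ y₀)) * (M * N)
      ≤ (∑ p ∈ P, #(binCollision M N x₀ y₀ p)) * (M * N) := by
        gcongr; exact card_biUnion_le
    _ = #P * Fintype.card ((α → Fin M) × (β → Fin N)) := by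
        rw [sum_mul, sum_const_nat fun p hp => card_binCollision_mul (hP p hp).1 (hP p hp).2]

end Binning

open scoped Classical in
/-- Random-binning error bound (joint case): under independent uniformly random
binnings `φ_x : X → Fin M_x` and `φ_y : Y → Fin M_y` (jointly uniform over the
product of the two function spaces), the probability that some pair `(x̃, ỹ)`
with `x̃ ≠ x₀`, `ỹ ≠ y₀` and `L (x̃, ỹ) ≤ T` collides with `(x₀, y₀)` in both
bins is at most `2 · 2^T / (M_x · M_y)`. -/
theorem random_binning_error_joint (X Y : Type*) [Fintype X] [Fintype Y]
    (x₀ : X) (y₀ : Y) (L : X × Y → ℕ)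
    (hL : ∀ l : ℕ, (Finset.univ.filter fun p : X × Y => L p = l).card ≤ 2 ^ l)
    (Mx My : ℕ) (hMx : 1 ≤ Mx) (hMy : 1 ≤ My) (T : ℝ) (hT : 0 ≤ T) :
    ((Finset.univ.filter fun φ : (X → Fin Mx) × (Y → Fin My) =>
        ∃ x : X, ∃ y : Y, x ≠ x₀ ∧ y ≠ y₀ ∧ (L (x, y) : ℝ) ≤ T ∧
          φ.1 x = φ.1 x₀ ∧ φ.2 y = φ.2 y₀).card : ℝ) /
      (Fintype.card ((X → Fin Mx) × (Y → Fin My))) ≤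
      2 * (2 : ℝ) ^ T / ((Mx : ℝ) * My) := by
  set P : Finset (X × Y) := {p | (L p : ℝ) ≤ T ∧ p.1 ≠ x₀ ∧ p.2 ≠ y₀}
  have hcount := card_biUnion_binCollision_mul_le (M := Mx) (N := My) P fun _ hp =>
    (mem_filter.1 hp).2.2
  have hunion : (Finset.univ.filter fun φ : (X → Fin Mx) × (Y → Fin My) =>
        ∃ x : X, ∃ y : Y, x ≠ x₀ ∧ y ≠ y₀ ∧ (L (x, y) : ℝ) ≤ T ∧
          φ.1 x = φ.1 x₀ ∧ φ.2 y = φ.2 y₀) ⊆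
        P.biUnion (binCollision Mx My x₀ y₀) := by
    intro φ hφ
    obtain ⟨x, y, hx, hy, hLT, h₁, h₂⟩ := (mem_filter.1 hφ).2
    exact mem_biUnion.2 ⟨(x, y), by simp [P, hx, hy, hLT], by simp [binCollision, h₁, h₂]⟩
  have hP : (#P : ℝ) ≤ 2 * 2 ^ T :=
    (Nat.cast_le.2 (card_le_card (monotone_filter_right _ fun _ _ => And.left))).trans
      ((show IsLosslessLength L from hL).card_filter_le_real hT)
  have : Nonempty (X → Fin Mx) := ⟨fun _ => ⟨0, hMx⟩⟩
  have : Nonempty (Y → Fin My) := ⟨fun _ => ⟨0, hMy⟩⟩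
  rw [div_le_div_iff₀ (by positivity) (by positivity)]
  calc _ ≤ (#P : ℝ) * Fintype.card ((X → Fin Mx) × (Y → Fin My)) := by
        exact_mod_cast (Nat.mul_le_mul_right _ (card_le_card hunion)).trans hcount
    _ ≤ _ := by gcongr
end
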